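/- If for every $n\ge 1$, every $a\in\mathcal{A}$, and every constraint index $i$, the event $|g_i(a) - \mu_{n-1}(a,i)| < \beta_{n-1}(a,i)$ holds (so that $g_i(a)\in Q_n(a,i)$ for all $n,a,i$), and the initial safe set $S_0$ satisfies $g_i(a)\ge 0$ for all $a\in S_0$ and all $i$, then every parameter in $S_n$ (defined by the recursive Lipschitz expansion $S_n = \bigcap_i\bigcup_{a\in S_{n-1}}\{a' : l_n(a,i)-L\|a-a'\|\ge 0\}$ with $l_n(a,i)=\min C_n(a,i)$, $C_n = C_{n-1}\cap Q_n$, $C_0(a,i)=[0,\infty)$ for $a\in S_0$ and $\mathbb{R}$ otherwise) satisfies $g_i(a')\ge 0$ for all $i$; i.e., on the event that all confidence intervals are valid, every element of every safe set $S_n$ is truly safe. -/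

import Mathlib

/-!
The confidence sets `C n a i` only ever shrink by intersecting with valid confidence
intervals, so they always contain the true value `g i a`; their infimum `l_n(a, i)` is
therefore a lower bound for `g i a`. A point `a'` admitted to `S (n + 1)` through a witness
`a ∈ S n` then satisfies `g i a' ≥ g i a - L‖a - a'‖ ≥ l_n(a, i) - L‖a - a'‖ ≥ 0`.
-/

open Classical Set

theorem mem_of_forall_succ_eq_inter {α : Type*} {C D : ℕ → Set α} {x : α}
    (h0 : x ∈ C 0) (hrec : ∀ n, C (n + 1) = C n ∩ D n) (hD : ∀ n, x ∈ D n) :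
    ∀ n, x ∈ C n
  | 0 => h0
  | n + 1 => hrec n ▸ ⟨mem_of_forall_succ_eq_inter h0 hrec hD n, hD n⟩

theorem nonneg_of_le_of_sub_lipschitz_nonneg {E : Type*} [SeminormedAddCommGroup E]
    {f : E → ℝ} {L l : ℝ} {a a' : E} (hf : |f a - f a'| ≤ L * ‖a - a'‖) (hl : l ≤ f a)
    (h : 0 ≤ l - L * ‖a - a'‖) : 0 ≤ f a' := by
  linarith [le_abs_self (f a - f a')]

theorem stmt14_general {d : ℕ} {I : Type*}
    (𝒜 : Set (EuclideanSpace ℝ (Fin d)))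
    (g : I → EuclideanSpace ℝ (Fin d) → ℝ) (L : ℝ)
    (hLip : ∀ i a b, |g i a - g i b| ≤ L * ‖a - b‖)
    (μ' β : ℕ → EuclideanSpace ℝ (Fin d) → I → ℝ)
    (S0 : Set (EuclideanSpace ℝ (Fin d)))
    (hS0safe : ∀ a ∈ S0, ∀ i : I, 0 ≤ g i a)
    (hconf : ∀ n a i, |g i a - μ' n a i| < β n a i)
    (C : ℕ → EuclideanSpace ℝ (Fin d) → I → Set ℝ)
    (S : ℕ → Set (EuclideanSpace ℝ (Fin d)))
    (hC0 : ∀ a i, C 0 a i = if a ∈ S0 then Set.Ici (0 : ℝ) else Set.univ)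
    (hCrec : ∀ n a i, C (n + 1) a i =
      C n a i ∩ Set.Icc (μ' n a i - β n a i) (μ' n a i + β n a i))
    (hS0' : S 0 = S0)
    (hSrec : ∀ n, S (n + 1) = ⋂ i : I, ⋃ a ∈ S n,
      {a' ∈ 𝒜 | 0 ≤ sInf (C (n + 1) a i) - L * ‖a - a'‖}) :
    ∀ n, ∀ a' ∈ S n, ∀ i : I, 0 ≤ g i a' := by
  have hmem0 (a i) : g i a ∈ C 0 a i := by
    rw [hC0]
    split_ifs with ha
    exacts [hS0safe a ha i, trivial]
  have hmem (n a i) : g i a ∈ C n a i :=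
    mem_of_forall_succ_eq_inter (C := fun n => C n a i) (hmem0 a i) (fun n => hCrec n a i)
      (fun n => mem_Icc_iff_abs_le.mp ((abs_sub_comm _ _).trans_le (hconf n a i).le)) n
  rintro (_ | n) a' ha' i
  · exact hS0safe a' (hS0' ▸ ha') i
  · rw [hSrec, mem_iInter] at ha'
    obtain ⟨a, -, -, hsafe⟩ := mem_iUnion₂.mp (ha' i)
    have hlow : sInf (C (n + 1) a i) ≤ g i a :=
      csInf_le (by rw [hCrec]; exact bddBelow_Icc.mono inter_subset_right) (hmem _ a i)
    exact nonneg_of_le_of_sub_lipschitz_nonneg (hLip i a a') hlow hsafe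

/-- Deterministic core of Theorem 1 (safety of CoLSafe): on the event that all confidence
intervals are valid, every element of every safe set `S n` is truly safe. -/
theorem stmt14 {d : ℕ} {I : Type*} [Finite I]
    (𝒜 : Set (EuclideanSpace ℝ (Fin d))) (h𝒜 : 𝒜.Finite)
    (g : I → EuclideanSpace ℝ (Fin d) → ℝ) (L : ℝ) (hL : 0 ≤ L)
    (hLip : ∀ i a b, |g i a - g i b| ≤ L * ‖a - b‖)
    (μ' β : ℕ → EuclideanSpace ℝ (Fin d) → I → ℝ)
    (S0 : Set (EuclideanSpace ℝ (Fin d))) (hS0sub : S0 ⊆ 𝒜)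
    (hS0safe : ∀ a ∈ S0, ∀ i : I, 0 ≤ g i a)
    (hconf : ∀ n a i, |g i a - μ' n a i| < β n a i)
    (C : ℕ → EuclideanSpace ℝ (Fin d) → I → Set ℝ)
    (S : ℕ → Set (EuclideanSpace ℝ (Fin d)))
    (hC0 : ∀ a i, C 0 a i = if a ∈ S0 then Set.Ici (0 : ℝ) else Set.univ)
    (hCrec : ∀ n a i, C (n + 1) a i =
      C n a i ∩ Set.Icc (μ' n a i - β n a i) (μ' n a i + β n a i))
    (hS0' : S 0 = S0)
    (hSrec : ∀ n, S (n + 1) = ⋂ i : I, ⋃ a ∈ S n,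
      {a' ∈ 𝒜 | 0 ≤ sInf (C (n + 1) a i) - L * ‖a - a'‖}) :
    ∀ n, ∀ a' ∈ S n, ∀ i : I, 0 ≤ g i a' :=
  stmt14_general 𝒜 g L hLip μ' β S0 hS0safe hconf C S hC0 hCrec hS0' hSrec
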